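/- Let X = L ∪ J ∪ R be a continuum in the class 𝒞 with L and R nondegenerate. If L ∩ R ≠ ∅, then the path components of X are exactly J and L ∪ R. If L ∩ R = ∅, then the path components of X are exactly J, L and R. -/

import Mathlib

open Set Topology

/-- A topological space has no isolated points if no singleton is open. -/
def NoIsolatedPoints (Y : Type*) [TopologicalSpace Y] : Prop :=
  ∀ y : Y, ¬ IsOpen ({y} : Set Y)

/-- `(M, f|_M)` is a minimal dynamical system with `f(M) = M`:
`M` is nonempty, `f(M) = M`, and `M` has no nonempty proper closed subset
invariant under `f|_M`. -/
def MinimalSystemOn {Y : Type*} [TopologicalSpace Y] (f : Y → Y) (M : Set Y) : Prop :=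
  M.Nonempty ∧ f '' M = M ∧
    ∀ N, N ⊆ M → N.Nonempty → IsClosed N → f '' N ⊆ N → N = M

/-- The system `𝓜(Y)` of all compact sets `M ⊆ Y` such that there is a continuous
`f : Y → Y` with `f(M) = M` and `(M, f|_M)` a minimal dynamical system. -/
def MSpace (Y : Type*) [TopologicalSpace Y] : Set (Set Y) :=
  {M | IsCompact M ∧ ∃ f : Y → Y, Continuous f ∧ MinimalSystemOn f M}

/-- `𝓜(Z)` for a subspace `Z ⊆ X` (carrying the subspace topology),
viewed as a system of subsets of `X`. -/
def MSetIn {X : Type*} [TopologicalSpace X] (Z : Set X) : Set (Set X) :=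
  {M | ∃ M' ∈ MSpace (↥Z), M = Subtype.val '' M'}

/-- `𝓜*(L; R)`: members of `𝓜(L ∪ R)` (`= 𝓜(L ⊔ R)` for disjoint `L, R`) such that
`M ∩ L` and `M ∩ R` have the same cardinality. -/
def MStarIn {X : Type*} [TopologicalSpace X] (L R : Set X) : Set (Set X) :=
  {M | M ∈ MSetIn (L ∪ R) ∧ Cardinal.mk ↥(M ∩ L) = Cardinal.mk ↥(M ∩ R)}

/-- An arc: a set homeomorphic to `[0,1]`. -/
def IsArc {X : Type*} [TopologicalSpace X] (A : Set X) : Prop :=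
  Nonempty (↥A ≃ₜ ↥(Set.Icc (0:ℝ) 1))

/-- A ray: a set homeomorphic to `[0,∞)`. -/
def IsRaySet {X : Type*} [TopologicalSpace X] (A : Set X) : Prop :=
  Nonempty (↥A ≃ₜ ↥(Set.Ici (0:ℝ)))

/-- A Cantor set: nonempty, compact, totally disconnected, without isolated points
(metrizability is inherited from the ambient space). -/
def IsCantorSet {X : Type*} [TopologicalSpace X] (M : Set X) : Prop :=
  M.Nonempty ∧ IsCompact M ∧ IsTotallyDisconnected M ∧ NoIsolatedPoints ↥M

/-- A circle: a set homeomorphic to the unit circle `S¹ ⊆ ℂ`. -/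
def IsCircleSet {X : Type*} [TopologicalSpace X] (C : Set X) : Prop :=
  Nonempty (↥C ≃ₜ ↥(Metric.sphere (0:ℂ) 1))

/-- A cantoroid: a nonempty compact (metrizable) set without isolated points in which
the union of the degenerate (singleton) connected components is dense. -/
def IsCantoroid {X : Type*} [TopologicalSpace X] (M : Set X) : Prop :=
  M.Nonempty ∧ IsCompact M ∧ NoIsolatedPoints ↥M ∧
    Dense {x : ↥M | connectedComponent x = {x}}

/-- A union of finitely many (at least one) pairwise disjoint circles. -/
def FinUnionDisjCircles {X : Type*} [TopologicalSpace X] (M : Set X) : Prop :=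
  ∃ (n : ℕ) (C : Fin n → Set X), 0 < n ∧ (∀ i, IsCircleSet (C i)) ∧
    Pairwise (Function.onFun Disjoint C) ∧ M = ⋃ i, C i

/-- A local dendrite: a locally connected continuum containing only finitely many circles. -/
def IsLocalDendrite {X : Type*} [TopologicalSpace X] (L : Set X) : Prop :=
  IsCompact L ∧ IsConnected L ∧ LocallyConnectedSpace ↥L ∧
    {C : Set X | C ⊆ L ∧ IsCircleSet C}.Finite

/-- The decomposition `X = L ∪ J ∪ R` witnessing that the continuum `X` belongs to the
class `𝒞`: `J` is a free interval dense in `X`; `L` and `R` are locally connected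
subcontinua of `X` disjoint from `J`; and there are rays `J_L, J_R` with
`J = J_L ∪ J_R` such that `L ∪ J_L` is a compactification of `J_L` and `R ∪ J_R` is a
compactification of `J_R`. -/
structure ClassC {X : Type*} [TopologicalSpace X] (L J R : Set X) : Prop where
  union_eq : L ∪ J ∪ R = Set.univ
  openJ : IsOpen J
  freeJ : Nonempty (↥J ≃ₜ ↥(Set.Ioo (0:ℝ) 1))
  denseJ : Dense J
  compactL : IsCompact L
  connL : IsConnected L
  locConnL : LocallyConnectedSpace ↥L
  compactR : IsCompact R
  connR : IsConnected R
  locConnR : LocallyConnectedSpace ↥R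
  disjLJ : Disjoint L J
  disjRJ : Disjoint R J
  rays : ∃ JL JR : Set X, JL ∪ JR = J ∧ IsRaySet JL ∧ IsRaySet JR ∧
    IsCompact (L ∪ JL) ∧ L ∪ JL ⊆ closure JL ∧
    IsCompact (R ∪ JR) ∧ R ∪ JR ⊆ closure JR


open Metric Filter

section Peano
variable {Y : Type*} [MetricSpace Y]

lemma chain_conn {C : Set Y} (hC : IsPreconnected C) {a b : Y} (ha : a ∈ C) (hb : b ∈ C)
    {δ : ℝ} (hδ : 0 < δ) :
    ∃ (n : ℕ) (p : ℕ → Y), p 0 = a ∧ p n = b ∧ (∀ i < n, dist (p i) (p (i+1)) < δ) ∧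
      (∀ i ≤ n, p i ∈ C) := by
  classical
  set S : Set Y := {y | y ∈ C ∧ ∃ (n : ℕ) (p : ℕ → Y), p 0 = a ∧ p n = y ∧
      (∀ i < n, dist (p i) (p (i+1)) < δ) ∧ (∀ i ≤ n, p i ∈ C)} with hS
  have haS : a ∈ S := ⟨ha, 0, fun _ => a, rfl, rfl, by simp, by simp [ha]⟩
  have hext : ∀ y ∈ S, ∀ z ∈ C, dist y z < δ → z ∈ S := by
    rintro y ⟨hyC, n, p, hp0, hpn, hmesh, hmem⟩ z hzC hd
    refine ⟨hzC, n+1, fun i => if i ≤ n then p i else z, by simp [hp0], by simp, ?_, ?_⟩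
    · intro i hi
      rcases lt_or_ge i n with h | h
      · simpa [Nat.le_of_lt h, Nat.succ_le_of_lt h] using hmesh i h
      · have hin : i = n := le_antisymm (Nat.lt_succ_iff.mp hi) h
        subst hin
        simpa [hpn] using hd
    · intro i hi
      by_cases h : i ≤ n
      · simpa [h] using hmem i h
      · simpa [h] using hzC
  set U : Set Y := ⋃ y ∈ S, ball y (δ/2) with hU
  set V : Set Y := ⋃ y ∈ C \ S, ball y (δ/2) with hV
  have hUo : IsOpen U := isOpen_biUnion (fun _ _ => isOpen_ball)
  have hVo : IsOpen V := isOpen_biUnion (fun _ _ => isOpen_ball)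
  have hdisj : Disjoint U V := by
    rw [Set.disjoint_left]
    rintro z hzU hzV
    rcases mem_iUnion₂.mp hzU with ⟨y, hyS, hy⟩
    rcases mem_iUnion₂.mp hzV with ⟨w, hwCS, hw⟩
    have hdyw : dist y w < δ := by
      have h1 : dist z y < δ/2 := mem_ball.mp hy
      have h2 : dist z w < δ/2 := mem_ball.mp hw
      calc dist y w ≤ dist y z + dist z w := dist_triangle y z w
        _ < δ := by rw [dist_comm y z]; linarith
    exact hwCS.2 (hext y hyS w hwCS.1 hdyw)
  have hsub : C ⊆ U ∪ V := by
    intro z hz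
    by_cases h : z ∈ S
    · exact Or.inl (mem_biUnion h (mem_ball_self (by linarith)))
    · exact Or.inr (mem_biUnion ⟨hz, h⟩ (mem_ball_self (by linarith)))
  have hCU : (C ∩ U).Nonempty := ⟨a, ha, mem_biUnion haS (mem_ball_self (by linarith))⟩
  have hCsubU : C ⊆ U := hC.subset_left_of_subset_union hUo hVo hdisj hsub hCU
  rcases mem_iUnion₂.mp (hCsubU hb) with ⟨y, hyS, hy⟩
  have hbS : b ∈ S := by
    refine hext y hyS b hb ?_
    rw [dist_comm]
    exact lt_trans (mem_ball.mp hy) (by linarith)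
  exact hbS.2

lemma ulc [CompactSpace Y] [LocallyConnectedSpace Y] {ε : ℝ} (hε : 0 < ε) :
    ∃ δ > 0, ∀ x y : Y, dist x y < δ →
      ∃ C : Set Y, IsPreconnected C ∧ x ∈ C ∧ y ∈ C ∧ ∀ z ∈ C, ∀ z' ∈ C, dist z z' < ε := by
  have hcover : (univ : Set Y) ⊆ ⋃ w : Y, connectedComponentIn (ball w (ε/4)) w := by
    intro w _
    exact mem_iUnion.mpr ⟨w, mem_connectedComponentIn (mem_ball_self (by linarith))⟩
  obtain ⟨δ, hδ, hlb⟩ := lebesgue_number_lemma_of_metric isCompact_univ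
    (fun w => isOpen_ball.connectedComponentIn) hcover
  refine ⟨δ, hδ, fun x y hxy => ?_⟩
  obtain ⟨w, hw⟩ := hlb x (mem_univ x)
  refine ⟨connectedComponentIn (ball w (ε/4)) w, isPreconnected_connectedComponentIn,
    hw (mem_ball_self hδ), hw (mem_ball'.mpr hxy), ?_⟩
  intro z hz z' hz'
  have h1 := connectedComponentIn_subset (ball w (ε/4)) w hz
  have h2 := connectedComponentIn_subset (ball w (ε/4)) w hz'
  have d1 : dist z w < ε/4 := mem_ball.mp h1
  have d2 : dist z' w < ε/4 := mem_ball.mp h2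
  calc dist z z' ≤ dist z w + dist w z' := dist_triangle z w z'
    _ < ε := by rw [dist_comm w z']; linarith


theorem peano_joined [CompactSpace Y] [ConnectedSpace Y] [LocallyConnectedSpace Y]
    (x y : Y) : Joined x y := by
  classical
  have h1 : ∀ n : ℕ, ∃ δ : ℝ, 0 < δ ∧ δ ≤ (2⁻¹:ℝ)^n ∧ ∀ a b : Y, dist a b < δ →
      ∃ C : Set Y, IsPreconnected C ∧ a ∈ C ∧ b ∈ C ∧
        ∀ z ∈ C, ∀ z' ∈ C, dist z z' < (2⁻¹:ℝ)^n := by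
    intro n
    obtain ⟨δ, hδ, hP⟩ := ulc (Y := Y) (ε := (2⁻¹:ℝ)^n) (by positivity)
    exact ⟨min δ ((2⁻¹:ℝ)^n), by positivity, min_le_right _ _,
      fun a b hab => hP a b (lt_of_lt_of_le hab (min_le_left _ _))⟩
  choose d hd0 hdle hdC using h1
  have hdle' : ∀ n, d n ≤ (2⁻¹:ℝ)^n := hdle
  set Good : ℕ → (ℕ → Y) × ℕ → Prop := fun n pN =>
    0 < pN.2 ∧ pN.1 0 = x ∧ pN.1 pN.2 = y ∧ ∀ i < pN.2, dist (pN.1 i) (pN.1 (i+1)) < d n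
    with hGoodDef
  -- base stage
  have base : ∃ pN : (ℕ → Y) × ℕ, Good 0 pN := by
    obtain ⟨k, q, hq0, hqk, hqm, _⟩ :=
      chain_conn isPreconnected_univ (mem_univ x) (mem_univ y) (hd0 0)
    refine ⟨⟨fun i => q (min i k), max k 1⟩,
      Nat.lt_of_lt_of_le Nat.one_pos (le_max_right _ _), by simpa using hq0, ?_, ?_⟩
    · have h : min (max k 1) k = k := by omega
      show q (min (max k 1) k) = y
      rw [h, hqk]
    · intro i hi
      show dist (q (min i k)) (q (min (i+1) k)) < d 0
      rcases lt_or_ge i k with h | h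
      · have h1 : min i k = i := by omega
        have h2 : min (i+1) k = i+1 := by omega
        rw [h1, h2]; exact hqm i h
      · have h1 : min i k = k := by omega
        have h2 : min (i+1) k = k := by omega
        rw [h1, h2]; simpa using hd0 0
  -- refinement step
  have step : ∀ n (pN : (ℕ → Y) × ℕ), Good n pN →
      ∃ qM : (ℕ → Y) × ℕ, Good (n+1) qM ∧ ∃ m : ℕ, 2 ≤ m ∧ qM.2 = pN.2 * m ∧
        ∀ j ≤ qM.2, dist (qM.1 j) (pN.1 (j / m)) ≤ (2⁻¹:ℝ)^n := by
    rintro n ⟨p, N⟩ ⟨hN, hp0, hpN, hmesh⟩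
    dsimp only at hN hp0 hpN hmesh
    have hch : ∀ i : Fin N, ∃ (k : ℕ) (q : ℕ → Y), q 0 = p i ∧ q k = p (i+1) ∧
        (∀ l < k, dist (q l) (q (l+1)) < d (n+1)) ∧
        ∀ l ≤ k, dist (q l) (p i) < (2⁻¹:ℝ)^n := by
      intro i
      obtain ⟨C, hCc, hC1, hC2, hCd⟩ := hdC n (p i) (p (i+1)) (hmesh i i.2)
      obtain ⟨k, q, hq0, hqk, hqm, hqmem⟩ := chain_conn hCc hC1 hC2 (hd0 (n+1))
      exact ⟨k, q, hq0, hqk, hqm, fun l hl => hCd _ (hqmem l hl) _ hC1⟩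
    choose k q hq0 hqk hqm hqnear using hch
    set m : ℕ := 2 + Finset.univ.sup k with hmdef
    have hm2 : 2 ≤ m := Nat.le_add_right 2 _
    have hm0 : 0 < m := by omega
    have hkm : ∀ i : Fin N, k i + 2 ≤ m := by
      intro i
      have := Finset.le_sup (f := k) (Finset.mem_univ i)
      omega
    set Q : ℕ → ℕ → Y := fun i l => if h : i < N then q ⟨i, h⟩ (min l (k ⟨i, h⟩)) else y
      with hQdef
    have hQ0 : ∀ i (h : i < N), Q i 0 = p i := by
      intro i h; simp only [hQdef, dif_pos h, Nat.zero_min]; exact hq0 ⟨i, h⟩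
    have hQend : ∀ i (h : i < N) l, k ⟨i, h⟩ ≤ l → Q i l = p (i+1) := by
      intro i h l hl
      simp only [hQdef, dif_pos h, min_eq_right hl]
      exact hqk ⟨i, h⟩
    have hQmesh : ∀ i (h : i < N) l, dist (Q i l) (Q i (l+1)) < d (n+1) := by
      intro i h l
      simp only [hQdef, dif_pos h]
      rcases lt_or_ge l (k ⟨i, h⟩) with hl | hl
      · have h1 : min l (k ⟨i,h⟩) = l := by omega
        have h2 : min (l+1) (k ⟨i,h⟩) = l+1 := by omega
        rw [h1, h2]; exact hqm ⟨i,h⟩ l hl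
      · have h1 : min l (k ⟨i,h⟩) = k ⟨i,h⟩ := by omega
        have h2 : min (l+1) (k ⟨i,h⟩) = k ⟨i,h⟩ := by omega
        rw [h1, h2]; simpa using hd0 (n+1)
    have hQnear : ∀ i (h : i < N) l, dist (Q i l) (p i) < (2⁻¹:ℝ)^n := by
      intro i h l
      simp only [hQdef, dif_pos h]
      exact hqnear ⟨i,h⟩ _ (min_le_right _ _)
    set p' : ℕ → Y := fun j => if j < N * m then Q (j / m) (j % m) else y with hp'def
    have hNm0 : 0 < N * m := Nat.mul_pos hN hm0
    have hA : p' 0 = x := by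
      simp only [hp'def, if_pos hNm0, Nat.zero_div, Nat.zero_mod]
      rw [hQ0 0 hN, hp0]
    have hB : p' (N * m) = y := by simp [hp'def]
    have hC : ∀ j ≤ N * m, dist (p' j) (p (j / m)) ≤ (2⁻¹:ℝ)^n := by
      intro j hj
      rcases eq_or_lt_of_le hj with h | h
      · subst h
        have hcan : N * m / m = N := Nat.mul_div_cancel N hm0
        simp only [hp'def, if_neg (lt_irrefl (N*m)), hcan, hpN, dist_self]
        positivity
      · have hiN : j / m < N := (Nat.div_lt_iff_lt_mul hm0).mpr h
        simp only [hp'def, if_pos h]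
        exact le_of_lt (hQnear _ hiN _)
    have hD : ∀ j < N * m, dist (p' j) (p' (j+1)) < d (n+1) := by
      intro j hj
      have hiN : j / m < N := (Nat.div_lt_iff_lt_mul hm0).mpr hj
      have hjd : m * (j / m) + j % m = j := Nat.div_add_mod j m
      have hrm : j % m < m := Nat.mod_lt _ hm0
      rcases lt_or_ge (j % m + 1) m with hr | hr
      · -- same block
        have hj1 : j + 1 = m * (j / m) + (j % m + 1) := by omega
        have hj1lt : j + 1 < N * m := by
          calc j + 1 < m * (j / m) + m := by omega
            _ = m * (j / m + 1) := by ring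
            _ ≤ m * N := Nat.mul_le_mul le_rfl hiN
            _ = N * m := Nat.mul_comm m N
        have hdiv : (j+1) / m = j / m := by
          rw [hj1, Nat.mul_add_div hm0, Nat.div_eq_of_lt hr]
          omega
        have hmod : (j+1) % m = j % m + 1 := by
          rw [hj1, Nat.mul_add_mod, Nat.mod_eq_of_lt hr]
        simp only [hp'def, if_pos hj, if_pos hj1lt, hdiv, hmod]
        exact hQmesh _ hiN _
      · -- block boundary
        have hrm1 : j % m + 1 = m := by omega
        have hkr : k ⟨j/m, hiN⟩ ≤ j % m := by have := hkm ⟨j/m, hiN⟩; omega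
        have hpj : p' j = p (j/m + 1) := by
          simp only [hp'def, if_pos hj]
          exact hQend _ hiN _ hkr
        have hj1 : j + 1 = m * (j/m + 1) := by
          have hx : m * (j/m + 1) = m * (j/m) + m := by ring
          omega
        have hiN1 : j/m + 1 ≤ N := hiN
        rcases lt_or_eq_of_le hiN1 with hlt | heq
        · have hj1lt : j + 1 < N * m := by
            calc j + 1 = m * (j/m + 1) := hj1
              _ < m * N := by
                  have h1 : m * (j/m+1+1) ≤ m * N := Nat.mul_le_mul le_rfl hlt
                  have h2 : m * (j/m+1+1) = m * (j/m+1) + m := by ring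
                  omega
              _ = N * m := Nat.mul_comm m N
          have hdiv : (j+1)/m = j/m + 1 := by rw [hj1, Nat.mul_div_cancel_left _ hm0]
          have hmod : (j+1) % m = 0 := by rw [hj1, Nat.mul_mod_right]
          have : p' (j+1) = p (j/m + 1) := by
            simp only [hp'def, if_pos hj1lt, hdiv, hmod]
            exact hQ0 _ hlt
          rw [hpj, this]; simpa using hd0 (n+1)
        · have hj1eq : j + 1 = N * m := by rw [hj1, heq, Nat.mul_comm]
          have : p' (j+1) = p (j/m + 1) := by
            simp only [hp'def, hj1eq, if_neg (lt_irrefl _)]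
            rw [heq, hpN]
          rw [hpj, this]; simpa using hd0 (n+1)
    exact ⟨⟨p', N * m⟩, ⟨hNm0, hA, hB, hD⟩, m, hm2, rfl, hC⟩
  -- iterate the refinement
  let F : (n : ℕ) → {pN : (ℕ → Y) × ℕ // Good n pN} := fun n =>
    Nat.rec ⟨base.choose, base.choose_spec⟩
      (fun kk ih => ⟨(step kk ih.1 ih.2).choose, (step kk ih.1 ih.2).choose_spec.1⟩) n
  have hGoodn : ∀ n, Good n (F n).1 := fun n => (F n).2
  have hlink : ∀ n, ∃ m : ℕ, 2 ≤ m ∧ (F (n+1)).1.2 = (F n).1.2 * m ∧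
      ∀ j ≤ (F (n+1)).1.2, dist ((F (n+1)).1.1 j) ((F n).1.1 (j / m)) ≤ (2⁻¹:ℝ)^n :=
    fun n => (step n (F n).1 (F n).2).choose_spec.2
  set p : ℕ → ℕ → Y := fun n => (F n).1.1 with hpdef
  set Nn : ℕ → ℕ := fun n => (F n).1.2 with hNdef
  have hNpos : ∀ n, 0 < Nn n := fun n => (hGoodn n).1
  have hP0 : ∀ n, p n 0 = x := fun n => (hGoodn n).2.1
  have hPN : ∀ n, p n (Nn n) = y := fun n => (hGoodn n).2.2.1
  have hPmesh : ∀ n, ∀ i < Nn n, dist (p n i) (p n (i+1)) < d n := fun n => (hGoodn n).2.2.2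
  set f : ℕ → ℝ → Y := fun n t => p n ⌊t * (Nn n : ℝ)⌋₊ with hfdef
  have claim1 : ∀ n, ∀ t ∈ Icc (0:ℝ) 1, dist (f n t) (f (n+1) t) ≤ (2⁻¹:ℝ)^n := by
    intro n t ht
    obtain ⟨m, hm2, hNm, hnear⟩ := hlink n
    have hm0 : 0 < m := by omega
    have hj : ⌊t * (Nn (n+1) : ℝ)⌋₊ ≤ Nn (n+1) := by
      have h1 : t * (Nn (n+1):ℝ) ≤ ((Nn (n+1) : ℕ):ℝ) :=
        mul_le_of_le_one_left (Nat.cast_nonneg _) ht.2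
      calc ⌊t * (Nn (n+1):ℝ)⌋₊ ≤ ⌊((Nn (n+1):ℕ):ℝ)⌋₊ := Nat.floor_le_floor h1
        _ = Nn (n+1) := Nat.floor_natCast _
    have hcast : (Nn (n+1) : ℝ) = (Nn n : ℝ) * (m:ℝ) := by exact_mod_cast congrArg Nat.cast hNm
    have heq2 : t * (Nn n : ℝ) = (t * (Nn (n+1):ℝ)) / (m:ℝ) := by
      rw [hcast]
      have hm0' : (m:ℝ) ≠ 0 := by positivity
      field_simp
    have hdiv : ⌊t * (Nn (n+1):ℝ)⌋₊ / m = ⌊t * (Nn n:ℝ)⌋₊ := by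
      rw [heq2, Nat.floor_div_natCast]
    have hkey := hnear ⌊t * (Nn (n+1):ℝ)⌋₊ hj
    rw [hdiv] at hkey
    simp only [hfdef]
    rw [dist_comm]
    exact hkey
  have claim2 : ∀ n, ∀ s t : ℝ, s ∈ Icc (0:ℝ) 1 → t ∈ Icc (0:ℝ) 1 → s ≤ t →
      (t - s) * (Nn n : ℝ) ≤ 1 → dist (f n s) (f n t) ≤ (2⁻¹:ℝ)^n := by
    intro n s t hs ht hst hprod
    have h12 : ⌊s * (Nn n:ℝ)⌋₊ ≤ ⌊t * (Nn n:ℝ)⌋₊ :=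
      Nat.floor_le_floor (mul_le_mul_of_nonneg_right hst (Nat.cast_nonneg _))
    have hup : ⌊t * (Nn n:ℝ)⌋₊ ≤ ⌊s * (Nn n:ℝ)⌋₊ + 1 := by
      have h1 : t * (Nn n:ℝ) ≤ s * (Nn n:ℝ) + 1 := by nlinarith [hprod]
      calc ⌊t * (Nn n:ℝ)⌋₊ ≤ ⌊s * (Nn n:ℝ) + 1⌋₊ := Nat.floor_le_floor h1
        _ = ⌊s * (Nn n:ℝ)⌋₊ + 1 := Nat.floor_add_one (mul_nonneg hs.1 (Nat.cast_nonneg _))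
    have hi2N : ⌊t * (Nn n:ℝ)⌋₊ ≤ Nn n := by
      have h1 : t * (Nn n:ℝ) ≤ ((Nn n : ℕ):ℝ) :=
        mul_le_of_le_one_left (Nat.cast_nonneg _) ht.2
      calc ⌊t * (Nn n:ℝ)⌋₊ ≤ ⌊((Nn n:ℕ):ℝ)⌋₊ := Nat.floor_le_floor h1
        _ = Nn n := Nat.floor_natCast _
    simp only [hfdef]
    rcases eq_or_lt_of_le h12 with he | hlt
    · rw [he, dist_self]; positivity
    · have hi2e : ⌊t * (Nn n:ℝ)⌋₊ = ⌊s * (Nn n:ℝ)⌋₊ + 1 := by omega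
      have hi1N : ⌊s * (Nn n:ℝ)⌋₊ < Nn n := by omega
      rw [hi2e]
      exact le_trans (le_of_lt (hPmesh n _ hi1N)) (hdle' n)
  have hcau : ∀ t : Icc (0:ℝ) 1, ∃ z, Tendsto (fun n => f n t.1) atTop (𝓝 z) := by
    intro t
    apply cauchySeq_tendsto_of_complete
    apply cauchySeq_of_le_geometric 2⁻¹ 1 (by norm_num)
    intro n
    rw [one_mul]
    exact claim1 n t.1 t.2
  choose g hg using hcau
  have hgf : ∀ (t : Icc (0:ℝ) 1) (n : ℕ), dist (f n t.1) (g t) ≤ 2 * (2⁻¹:ℝ)^n := by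
    intro t n
    have h := dist_le_of_le_geometric_of_tendsto 2⁻¹ 1 (by norm_num : (2⁻¹:ℝ) < 1)
      (fun k => by rw [one_mul]; exact claim1 k t.1 t.2) (hg t) n
    calc dist (f n t.1) (g t) ≤ 1 * (2⁻¹:ℝ)^n / (1 - 2⁻¹) := h
      _ = 2 * (2⁻¹:ℝ)^n := by norm_num; ring
  have hgc : Continuous g := by
    rw [Metric.continuous_iff]
    intro t ε hε
    obtain ⟨n, hn⟩ : ∃ n : ℕ, (2⁻¹:ℝ)^n < ε/5 :=
      exists_pow_lt_of_lt_one (by positivity) (by norm_num)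
    have hNpos' : (0:ℝ) < (Nn n : ℝ) := by exact_mod_cast hNpos n
    refine ⟨1 / (Nn n : ℝ), by positivity, fun s hst => ?_⟩
    have hd' : dist s.1 t.1 < 1 / (Nn n : ℝ) := by rw [← Subtype.dist_eq]; exact hst
    have key : ∀ a b : Icc (0:ℝ) 1, a.1 ≤ b.1 → (b.1 - a.1) * (Nn n : ℝ) ≤ 1 →
        dist (g a) (g b) ≤ 5 * (2⁻¹:ℝ)^n := by
      intro a b hab hprod
      have h1 : dist (g a) (f n a.1) ≤ 2 * (2⁻¹:ℝ)^n := by rw [dist_comm]; exact hgf a n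
      have h2 := claim2 n a.1 b.1 a.2 b.2 hab hprod
      have h3 := hgf b n
      calc dist (g a) (g b)
          ≤ dist (g a) (f n a.1) + dist (f n a.1) (f n b.1) + dist (f n b.1) (g b) :=
            dist_triangle4 _ _ _ _
        _ ≤ 2 * (2⁻¹:ℝ)^n + (2⁻¹:ℝ)^n + 2 * (2⁻¹:ℝ)^n := by
            have := add_le_add (add_le_add h1 h2) h3
            linarith
        _ = 5 * (2⁻¹:ℝ)^n := by ring
    have habs : |s.1 - t.1| < 1 / (Nn n : ℝ) := by rwa [Real.dist_eq] at hd'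
    rcases le_total s.1 t.1 with hor | hor
    · have hb : (t.1 - s.1) * (Nn n : ℝ) ≤ 1 := by
        have h1 : t.1 - s.1 < 1 / (Nn n : ℝ) := by
          have := abs_lt.mp habs
          linarith [this.1]
        have := (lt_div_iff₀ hNpos').mp h1
        linarith
      have := key s t hor hb
      rw [dist_comm (g s) (g t)] at this ⊢
      calc dist (g t) (g s) ≤ 5 * (2⁻¹:ℝ)^n := this
        _ < ε := by linarith
    · have hb : (s.1 - t.1) * (Nn n : ℝ) ≤ 1 := by
        have h1 : s.1 - t.1 < 1 / (Nn n : ℝ) := by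
          have := abs_lt.mp habs
          linarith [this.2]
        have := (lt_div_iff₀ hNpos').mp h1
        linarith
      have := key t s hor hb
      rw [dist_comm (g t) (g s)] at this
      calc dist (g s) (g t) ≤ 5 * (2⁻¹:ℝ)^n := this
        _ < ε := by linarith
  have hg0 : g ⟨0, by norm_num⟩ = x := by
    have hconst : (fun n => f n (0:ℝ)) = fun _ => x := by
      funext n
      simp only [hfdef]
      rw [zero_mul, Nat.floor_zero, hP0 n]
    have h2 : Tendsto (fun n => f n (0:ℝ)) atTop (𝓝 x) := by
      rw [hconst]; exact tendsto_const_nhds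
    exact tendsto_nhds_unique (hg ⟨0, by norm_num⟩) h2
  have hg1 : g ⟨1, by norm_num⟩ = y := by
    have hconst : (fun n => f n (1:ℝ)) = fun _ => y := by
      funext n
      simp only [hfdef]
      rw [one_mul, Nat.floor_natCast, hPN n]
    have h2 : Tendsto (fun n => f n (1:ℝ)) atTop (𝓝 y) := by
      rw [hconst]; exact tendsto_const_nhds
    exact tendsto_nhds_unique (hg ⟨1, by norm_num⟩) h2
  exact ⟨{ toFun := g, continuous_toFun := hgc, source' := hg0, target' := hg1 }⟩

theorem peano_pathConnectedSpace [CompactSpace Y] [ConnectedSpace Y] [LocallyConnectedSpace Y]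
    [Nonempty Y] : PathConnectedSpace Y :=
  ⟨‹_›, peano_joined⟩


end Peano

section NoPath
variable {X : Type*} [MetricSpace X]

lemma coord_pkg {J : Set X} (hJo : IsOpen J) (h : ↥J ≃ₜ ↥(Ioo (0:ℝ) 1)) (x₀ : X) :
    ∃ (ψ : X → ℝ) (ι : ℝ → X),
      (∀ x ∈ J, ψ x ∈ Ioo (0:ℝ) 1) ∧ (∀ x ∈ J, ι (ψ x) = x) ∧
      (∀ s ∈ Ioo (0:ℝ) 1, ψ (ι s) = s) ∧ (∀ s ∈ Ioo (0:ℝ) 1, ι s ∈ J) ∧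
      ContinuousOn ψ J ∧ ContinuousOn ι (Ioo (0:ℝ) 1) := by
  classical
  refine ⟨fun x => if hx : x ∈ J then ((h ⟨x, hx⟩ : ↥(Ioo (0:ℝ) 1)) : ℝ) else 2⁻¹,
    fun s => if hs : s ∈ Ioo (0:ℝ) 1 then ((h.symm ⟨s, hs⟩ : ↥J) : X) else x₀,
    ?_, ?_, ?_, ?_, ?_, ?_⟩
  · intro x hx; simp only [dif_pos hx]; exact (h ⟨x, hx⟩).2
  · intro x hx
    simp only [dif_pos hx, dif_pos (h ⟨x, hx⟩).2]
    have : (⟨((h ⟨x, hx⟩ : ↥(Ioo (0:ℝ) 1)) : ℝ), (h ⟨x, hx⟩).2⟩ : ↥(Ioo (0:ℝ) 1)) = h ⟨x, hx⟩ :=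
      rfl
    rw [this, h.symm_apply_apply]
  · intro s hs
    simp only [dif_pos hs, dif_pos (h.symm ⟨s, hs⟩).2]
    have : (⟨((h.symm ⟨s, hs⟩ : ↥J) : X), (h.symm ⟨s, hs⟩).2⟩ : ↥J) = h.symm ⟨s, hs⟩ := rfl
    rw [this, h.apply_symm_apply]
  · intro s hs; simp only [dif_pos hs]; exact (h.symm ⟨s, hs⟩).2
  · rw [continuousOn_iff_continuous_restrict]
    have : J.domRestrict (fun x => if hx : x ∈ J then ((h ⟨x, hx⟩ : ↥(Ioo (0:ℝ) 1)) : ℝ) else 2⁻¹)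
        = fun z : ↥J => ((h z : ↥(Ioo (0:ℝ) 1)) : ℝ) := by
      funext z
      simp only [domRestrict_apply, dif_pos z.2]
    rw [this]
    exact continuous_subtype_val.comp h.continuous
  · rw [continuousOn_iff_continuous_restrict]
    have : (Ioo (0:ℝ) 1).domRestrict
        (fun s => if hs : s ∈ Ioo (0:ℝ) 1 then ((h.symm ⟨s, hs⟩ : ↥J) : X) else x₀)
        = fun z : ↥(Ioo (0:ℝ) 1) => ((h.symm z : ↥J) : X) := by
      funext z
      simp only [domRestrict_apply, dif_pos z.2]
    rw [this]
    exact continuous_subtype_val.comp h.symm.continuous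

lemma rayEnd {J T K : Set X} (hJo : IsOpen J) (hTJ : T ⊆ J) (hKJ : ∀ x ∈ K, x ∉ J)
    (u : ↥T ≃ₜ ↥(Ici (0:ℝ))) (hcl : closure T = K ∪ T) (hK : K.Nontrivial)
    (ψ : X → ℝ) (ι : ℝ → X)
    (hψmem : ∀ x ∈ J, ψ x ∈ Ioo (0:ℝ) 1) (hιψ : ∀ x ∈ J, ι (ψ x) = x)
    (hψc : ContinuousOn ψ J)
    (hmany : ∀ N : ℕ, ∃ n : ℕ, N ≤ n ∧ ι (1/((n:ℝ)+2)) ∈ T)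
    (hψsn : ∀ n : ℕ, ι (1/((n:ℝ)+2)) ∈ T → ψ (ι (1/((n:ℝ)+2))) = 1/((n:ℝ)+2))
    (g : ℝ → X) (hg : Continuous g) (t0 : ℝ)
    (hi : ∀ ε > (0:ℝ), ∃ η > (0:ℝ), ∀ s ∈ Ioo (0:ℝ) η, ι s ∈ g '' (Icc t0 (t0+ε))) :
    False := by
  classical
  obtain ⟨p0, hp0⟩ := hK.nonempty
  set ρ : ℝ → X := fun M => if hM : (0:ℝ) ≤ M then ((u.symm ⟨M, hM⟩ : ↥T) : X) else p0
    with hρdef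
  have hρmem : ∀ M : ℝ, 0 ≤ M → ρ M ∈ T := by
    intro M hM; simp only [hρdef, dif_pos hM]; exact (u.symm ⟨M, hM⟩).2
  have hρc : ContinuousOn ρ (Ici (0:ℝ)) := by
    rw [continuousOn_iff_continuous_restrict]
    have : (Ici (0:ℝ)).domRestrict ρ = fun M : ↥(Ici (0:ℝ)) => ((u.symm M : ↥T) : X) := by
      funext M
      show (if hM : (0:ℝ) ≤ (M:ℝ) then ((u.symm ⟨(M:ℝ), hM⟩ : ↥T) : X) else p0) = _
      rw [dif_pos (show (0:ℝ) ≤ (M:ℝ) from M.2)]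
    rw [this]
    exact continuous_subtype_val.comp u.symm.continuous
  have hρsurj : ∀ x ∈ T, ∃ M, 0 ≤ M ∧ ρ M = x := by
    intro x hx
    refine ⟨((u ⟨x, hx⟩ : ↥(Ici (0:ℝ))) : ℝ), (u ⟨x, hx⟩).2, ?_⟩
    have hcnd : (0:ℝ) ≤ ((u ⟨x, hx⟩ : ↥(Ici (0:ℝ))) : ℝ) := (u ⟨x, hx⟩).2
    simp only [hρdef, dif_pos hcnd]
    exact congrArg Subtype.val (u.symm_apply_apply ⟨x, hx⟩)
  have hρinj : ∀ M, 0 ≤ M → ∀ M', 0 ≤ M' → ρ M = ρ M' → M = M' := by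
    intro M hM M' hM' heq
    simp only [hρdef, dif_pos hM, dif_pos hM'] at heq
    have h1 : (u.symm ⟨M, hM⟩ : ↥T) = u.symm ⟨M', hM'⟩ := Subtype.val_injective heq
    have h2 := u.symm.injective h1
    exact congrArg Subtype.val h2
  -- parameters of points with small ψ-coordinate are unbounded
  have hub : ∀ B ≥ (0:ℝ), ∀ ε > (0:ℝ), ∃ m, B < m ∧ 0 ≤ m ∧ ψ (ρ m) < ε := by
    intro B hB ε hε
    by_contra hcon
    push_neg at hcon
    obtain ⟨K₀, hK₀⟩ := exists_nat_gt (1/ε)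
    choose nf hnf1 hnf2 using fun kk : ℕ => hmany (kk + K₀)
    have hsmallco : ∀ kk : ℕ, ψ (ι (1/((nf kk : ℝ)+2))) < ε := by
      intro kk
      rw [hψsn _ (hnf2 kk)]
      have h0 : (K₀ : ℝ) ≤ (nf kk : ℝ) := by
        have : K₀ ≤ nf kk := le_trans (Nat.le_add_left _ _) (hnf1 kk)
        exact_mod_cast this
      have h2 : 1/ε < (nf kk : ℝ) + 2 := by linarith
      have h3 : (0:ℝ) < (nf kk : ℝ) + 2 := by positivity
      rw [div_lt_iff₀ h3]
      have h5 := mul_lt_mul_of_pos_left h2 hε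
      rw [mul_one_div, div_self (ne_of_gt hε)] at h5
      linarith
    choose Mf hMf0 hMfeq using fun kk : ℕ => hρsurj _ (hnf2 kk)
    have hMB : ∀ kk : ℕ, Mf kk ≤ B := by
      intro kk
      by_contra hgt
      push_neg at hgt
      have := hcon (Mf kk) hgt (hMf0 kk)
      rw [hMfeq kk] at this
      exact absurd this (not_le.mpr (hsmallco kk))
    have hHcpt : IsCompact (ρ '' Icc (0:ℝ) B) :=
      isCompact_Icc.image_of_continuousOn (hρc.mono Icc_subset_Ici_self)
    have hwmem : ∀ kk : ℕ, ι (1/((nf kk : ℝ)+2)) ∈ ρ '' Icc (0:ℝ) B := by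
      intro kk
      exact ⟨Mf kk, ⟨hMf0 kk, hMB kk⟩, hMfeq kk⟩
    obtain ⟨w, hwH, φ, hφ, hφtend⟩ := hHcpt.tendsto_subseq hwmem
    have hwJ : w ∈ J := by
      obtain ⟨m, hm, rfl⟩ := hwH
      exact hTJ (hρmem _ hm.1)
    have hψw : Tendsto (fun k => ψ (ι (1/((nf (φ k) : ℝ)+2)))) atTop (𝓝 (ψ w)) :=
      ((hψc.continuousAt (hJo.mem_nhds hwJ)).tendsto).comp hφtend
    have hψ0 : Tendsto (fun k => ψ (ι (1/((nf (φ k) : ℝ)+2)))) atTop (𝓝 0) := by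
      have hle : ∀ k : ℕ, ψ (ι (1/((nf (φ k) : ℝ)+2))) ≤ 1/((k:ℝ)+1) := by
        intro k
        rw [hψsn _ (hnf2 (φ k))]
        have h1 : (k : ℝ) + 1 ≤ (nf (φ k) : ℝ) + 2 := by
          have h2 : k ≤ φ k := hφ.le_apply
          have h3 : φ k ≤ φ k + K₀ := Nat.le_add_right _ _
          have h4 : φ k + K₀ ≤ nf (φ k) := hnf1 (φ k)
          have : (k:ℝ) ≤ (nf (φ k) : ℝ) := Nat.cast_le.mpr (le_trans h2 (le_trans h3 h4))
          linarith
        exact one_div_le_one_div_of_le (by positivity) h1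
      exact squeeze_zero (fun k => le_of_lt (hψmem _ (hTJ (hnf2 (φ k)))).1) hle
        tendsto_one_div_add_atTop_nhds_zero_nat
    have := tendsto_nhds_unique hψw hψ0
    have := (hψmem w hwJ).1
    linarith
  -- coordinates tend to 0 along the ray
  have htail : ∀ ε > (0:ℝ), ∃ M ≥ (0:ℝ), ∀ m ≥ M, ψ (ρ m) < ε := by
    intro ε hε
    by_contra hcon
    push_neg at hcon
    set s₀ : ℝ := min ε 1 / 2 with hs₀def
    have hs₀pos : 0 < s₀ := by
      have := lt_min hε one_pos; simp only [hs₀def]; linarith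
    have hs₀ε : s₀ < ε := by
      have := min_le_left ε 1; simp only [hs₀def]; linarith
    have hs₀1 : s₀ < 1 := by
      have := min_le_right ε 1; simp only [hs₀def]; linarith
    have hval : ∀ B ≥ (0:ℝ), ∃ m, B < m ∧ 0 ≤ m ∧ ψ (ρ m) = s₀ := by
      intro B hB
      obtain ⟨aa, haB, ha0, haψ⟩ := hub B hB s₀ hs₀pos
      obtain ⟨bb, hb1, hb2⟩ := hcon aa ha0
      have hcont : ContinuousOn (fun m => ψ (ρ m)) (Icc aa bb) := by
        apply ContinuousOn.comp hψc (hρc.mono ?_) ?_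
        · exact fun z hz => le_trans ha0 hz.1
        · exact fun z hz => hTJ (hρmem _ (le_trans ha0 hz.1))
      obtain ⟨m, hm, hmeq⟩ := intermediate_value_Icc hb1 hcont ⟨le_of_lt haψ, le_trans (le_of_lt hs₀ε) hb2⟩
      exact ⟨m, lt_of_lt_of_le haB hm.1, le_trans ha0 hm.1, hmeq⟩
    obtain ⟨m1, hm1B, hm10, hm1eq⟩ := hval 0 le_rfl
    obtain ⟨m2, hm2B, hm20, hm2eq⟩ := hval m1 hm10
    have he1 : ρ m1 = ι s₀ := by rw [← hm1eq]; rw [hιψ _ (hTJ (hρmem _ hm10))]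
    have he2 : ρ m2 = ι s₀ := by rw [← hm2eq]; rw [hιψ _ (hTJ (hρmem _ hm20))]
    have := hρinj m1 hm10 m2 hm20 (he1.trans he2.symm)
    linarith
  -- every point of K equals g t0
  have hpt : ∀ p ∈ K, p = g t0 := by
    intro p hp
    have hstep : ∀ n : ℕ, p ∈ g '' (Icc t0 (t0 + 1/((n:ℝ)+1))) := by
      intro n
      obtain ⟨η, hη, hηsub⟩ := hi (1/((n:ℝ)+1)) (by positivity)
      obtain ⟨M, hM0, hMs⟩ := htail η hη
      set M' := max M 0 with hM'def
      have h1 : ρ '' (Ici M') ⊆ g '' (Icc t0 (t0+1/((n:ℝ)+1))) := by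
        rintro _ ⟨m, hm, rfl⟩
        have hm0 : (0:ℝ) ≤ m := le_trans (le_max_right M 0) hm
        have hsmall : ψ (ρ m) < η := hMs m (le_trans (le_max_left M 0) hm)
        have hpos : 0 < ψ (ρ m) := (hψmem _ (hTJ (hρmem _ hm0))).1
        have h2 := hηsub (ψ (ρ m)) ⟨hpos, hsmall⟩
        rwa [hιψ _ (hTJ (hρmem _ hm0))] at h2
      have h2 : p ∈ closure (ρ '' (Ici M')) := by
        have hTsplit : T = ρ '' (Icc 0 M') ∪ ρ '' (Ici M') := by
          rw [← image_union, Icc_union_Ici_eq_Ici (le_max_right M 0)]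
          apply Subset.antisymm
          · intro x hx
            obtain ⟨m, hm0, hmeq⟩ := hρsurj x hx
            exact ⟨m, hm0, hmeq⟩
          · rintro _ ⟨m, hm, rfl⟩; exact hρmem _ hm
        have hcpt : IsCompact (ρ '' (Icc 0 M')) :=
          isCompact_Icc.image_of_continuousOn (hρc.mono Icc_subset_Ici_self)
        have hpcl : p ∈ closure T := by rw [hcl]; exact Or.inl hp
        rw [hTsplit, closure_union, hcpt.isClosed.closure_eq] at hpcl
        rcases hpcl with hh | hh
        · obtain ⟨m, hm, hmeq⟩ := hh
          have : p ∈ T := by rw [← hmeq]; exact hρmem _ hm.1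
          exact absurd (hTJ this) (hKJ p hp)
        · exact hh
      have h3 := closure_mono h1 h2
      rwa [IsClosed.closure_eq (isCompact_Icc.image hg).isClosed] at h3
    choose τ hτmem hτeq using hstep
    have hτtend : Tendsto τ atTop (𝓝 t0) := by
      apply tendsto_of_tendsto_of_tendsto_of_le_of_le tendsto_const_nhds ?_
        (fun n => (hτmem n).1) (fun n => (hτmem n).2)
      have : Tendsto (fun n : ℕ => t0 + 1/((n:ℝ)+1)) atTop (𝓝 (t0 + 0)) :=
        tendsto_const_nhds.add tendsto_one_div_add_atTop_nhds_zero_nat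
      simpa using this
    have h4 : Tendsto (fun n => g (τ n)) atTop (𝓝 (g t0)) := (hg.tendsto t0).comp hτtend
    have h5 : (fun n => g (τ n)) = fun _ => p := funext hτeq
    rw [h5] at h4
    exact (tendsto_nhds_unique tendsto_const_nhds h4)
  obtain ⟨pa, hpa, pb, hpb, hne⟩ := hK
  exact hne ((hpt pa hpa).trans (hpt pb hpb).symm)

lemma core0 {J L R JL JR : Set X} (hJo : IsOpen J)
    (ψ : X → ℝ) (ι : ℝ → X)
    (hψmem : ∀ x ∈ J, ψ x ∈ Ioo (0:ℝ) 1) (hιψ : ∀ x ∈ J, ι (ψ x) = x)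
    (hψι : ∀ s ∈ Ioo (0:ℝ) 1, ψ (ι s) = s) (hιmem : ∀ s ∈ Ioo (0:ℝ) 1, ι s ∈ J)
    (hψc : ContinuousOn ψ J)
    (hJLR : JL ∪ JR = J)
    (uL : ↥JL ≃ₜ ↥(Ici (0:ℝ))) (uR : ↥JR ≃ₜ ↥(Ici (0:ℝ)))
    (hclL : closure JL = L ∪ JL) (hclR : closure JR = R ∪ JR)
    (hLJ : ∀ x ∈ L, x ∉ J) (hRJ : ∀ x ∈ R, x ∉ J)
    (hL : L.Nontrivial) (hR : R.Nontrivial)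
    (g : ℝ → X) (hg : Continuous g) (t0 : ℝ) (ht01 : t0 < 1)
    (hgt0 : g t0 ∉ J) (hmem : ∀ t ∈ Ioc t0 1, g t ∈ J)
    (hfreq : ∀ ε > (0:ℝ), ∀ t' > t0, ∃ τ, τ ∈ Ioc t0 1 ∧ τ < t' ∧ ψ (g τ) < ε) :
    False := by
  classical
  have hccont : ∀ t ∈ Ioc t0 1, ContinuousAt (fun t => ψ (g t)) t := by
    intro t ht
    exact (hψc.continuousAt (hJo.mem_nhds (hmem t ht))).comp hg.continuousAt
  -- every sufficiently small coordinate is attained by g near t0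
  have hi : ∀ ε > (0:ℝ), ∃ η > (0:ℝ), ∀ s ∈ Ioo (0:ℝ) η, ι s ∈ g '' (Icc t0 (t0+ε)) := by
    intro ε hε
    set t₁ : ℝ := t0 + (min ε (1 - t0)) / 2 with ht₁def
    have hmin : 0 < min ε (1 - t0) := lt_min hε (by linarith)
    have ht₁l : t0 < t₁ := by simp only [ht₁def]; linarith
    have ht₁u1 : t₁ ≤ 1 := by
      have h1 := min_le_right ε (1-t0)
      simp only [ht₁def]; linarith
    have ht₁ue : t₁ ≤ t0 + ε := by
      have h1 := min_le_left ε (1-t0)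
      simp only [ht₁def]; linarith
    have ht₁mem : t₁ ∈ Ioc t0 1 := ⟨ht₁l, ht₁u1⟩
    refine ⟨ψ (g t₁), (hψmem _ (hmem _ ht₁mem)).1, ?_⟩
    intro s hs
    obtain ⟨τ, hτmem, hτlt, hτsmall⟩ := hfreq s hs.1 t₁ ht₁l
    have hsub : Icc τ t₁ ⊆ Ioc t0 1 := fun z hz =>
      ⟨lt_of_lt_of_le hτmem.1 hz.1, le_trans hz.2 ht₁u1⟩
    have hcont : ContinuousOn (fun t => ψ (g t)) (Icc τ t₁) :=
      fun z hz => (hccont z (hsub hz)).continuousWithinAt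
    have hmem2 : s ∈ Icc (ψ (g τ)) (ψ (g t₁)) := ⟨le_of_lt hτsmall, le_of_lt hs.2⟩
    obtain ⟨τ', hτ'mem, hτ'eq⟩ := intermediate_value_Icc (le_of_lt hτlt) hcont hmem2
    have hτ'J : g τ' ∈ J := hmem τ' (hsub hτ'mem)
    have heq : ι s = g τ' := by rw [← hτ'eq, hιψ _ hτ'J]
    rw [heq]
    exact mem_image_of_mem g
      ⟨le_trans (le_of_lt hτmem.1) hτ'mem.1, le_trans hτ'mem.2 ht₁ue⟩
  -- the points with coordinate 1/(n+2)
  have hsn : ∀ n : ℕ, (1:ℝ)/((n:ℝ)+2) ∈ Ioo (0:ℝ) 1 := by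
    intro n
    constructor
    · positivity
    · rw [div_lt_one (by positivity)]
      have h2 : (0:ℝ) ≤ (n:ℝ) := Nat.cast_nonneg n
      linarith
  have hpg : {n : ℕ | ι (1/((n:ℝ)+2)) ∈ JL}.Infinite ∨
      {n : ℕ | ι (1/((n:ℝ)+2)) ∈ JR}.Infinite := by
    by_contra hcon
    push_neg at hcon
    have huniv : ({n : ℕ | ι (1/((n:ℝ)+2)) ∈ JL} ∪ {n : ℕ | ι (1/((n:ℝ)+2)) ∈ JR}) = univ := by
      ext n
      refine ⟨fun _ => mem_univ _, fun _ => ?_⟩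
      have h1 := hιmem _ (hsn n)
      rw [← hJLR] at h1
      exact h1
    have hfin : (univ : Set ℕ).Finite := by
      rw [← huniv]; exact hcon.1.union hcon.2
    exact Set.infinite_univ hfin
  have hdo : ∀ (T : Set ℕ), T.Infinite → ∀ N : ℕ, ∃ n, N ≤ n ∧ n ∈ T := by
    intro T hT N
    obtain ⟨n, hn, hlt⟩ := hT.exists_gt N
    exact ⟨n, le_of_lt hlt, hn⟩
  rcases hpg with hInf | hInf
  · exact rayEnd hJo (hJLR ▸ subset_union_left) hLJ uL hclL hL ψ ι hψmem hιψ hψc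
      (fun N => by obtain ⟨n, h1, h2⟩ := hdo _ hInf N; exact ⟨n, h1, h2⟩)
      (fun n _ => hψι _ (hsn n)) g hg t0 hi
  · exact rayEnd hJo (hJLR ▸ subset_union_right) hRJ uR hclR hR ψ ι hψmem hιψ hψc
      (fun N => by obtain ⟨n, h1, h2⟩ := hdo _ hInf N; exact ⟨n, h1, h2⟩)
      (fun n _ => hψι _ (hsn n)) g hg t0 hi



variable {X : Type*} [MetricSpace X]

lemma no_join {L J R : Set X} (hC : ClassC L J R) (hL : L.Nontrivial)
    (hR : R.Nontrivial) {a b : X} (ha : a ∈ L ∪ R) (hb : b ∈ J) : ¬ Joined a b := by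
  classical
  intro hJoined
  obtain ⟨γ⟩ := hJoined
  set g : ℝ → X := ⇑γ.extend with hgdef
  have hgc : Continuous g := γ.continuous_extend
  have hg0 : g 0 = a := γ.extend_zero
  have hg1 : g 1 = b := γ.extend_one
  have hLRclosed : IsClosed (L ∪ R) := (hC.compactL.union hC.compactR).isClosed
  set Kset : Set ℝ := Icc 0 1 ∩ g ⁻¹' (L ∪ R) with hKdef
  have hKcl : IsClosed Kset := isClosed_Icc.inter (hLRclosed.preimage hgc)
  have hKcpt : IsCompact Kset := isCompact_Icc.of_isClosed_subset hKcl inter_subset_left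
  have hKne : Kset.Nonempty :=
    ⟨0, ⟨le_rfl, zero_le_one⟩, by rw [mem_preimage, hg0]; exact ha⟩
  set t0 : ℝ := sSup Kset with ht0def
  have ht0mem : t0 ∈ Kset := hKcpt.sSup_mem hKne
  have ht0LR : g t0 ∈ L ∪ R := ht0mem.2
  have hdisjJ : ∀ x ∈ L ∪ R, x ∉ J := by
    intro x hx hxJ
    cases hx with
    | inl h => exact Set.disjoint_left.mp hC.disjLJ h hxJ
    | inr h => exact Set.disjoint_left.mp hC.disjRJ h hxJ
  have hne1 : t0 ≠ 1 := fun h => hdisjJ (g t0) ht0LR (by rw [h, hg1]; exact hb)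
  have ht01 : t0 < 1 := lt_of_le_of_ne ht0mem.1.2 hne1
  have hgt0 : g t0 ∉ J := hdisjJ _ ht0LR
  have hmemJ : ∀ t ∈ Ioc t0 1, g t ∈ J := by
    intro t ht
    have htIcc : t ∈ Icc (0:ℝ) 1 := ⟨le_trans ht0mem.1.1 (le_of_lt ht.1), ht.2⟩
    have huniv : g t ∈ (univ : Set X) := mem_univ _
    rw [← hC.union_eq] at huniv
    have hnotLR : g t ∉ L ∪ R := by
      intro hLR
      have : t ∈ Kset := ⟨htIcc, hLR⟩
      have : t ≤ t0 := le_csSup hKcpt.bddAbove this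
      exact absurd ht.1 (not_lt.mpr this)
    rcases huniv with h1 | h1
    · rcases h1 with h2 | h2
      · exact absurd (Or.inl h2) hnotLR
      · exact h2
    · exact absurd (Or.inr h1) hnotLR
  obtain ⟨h⟩ := hC.freeJ
  obtain ⟨ψ, ι, hψmem, hιψ, hψι, hιmem, hψc, hιc⟩ := coord_pkg hC.openJ h a
  obtain ⟨JL, JR, hJLR, ⟨uL⟩, ⟨uR⟩, hcptL, hdenseL, hcptR, hdenseR⟩ := hC.rays
  have hclL : closure JL = L ∪ JL :=
    Subset.antisymm (closure_minimal subset_union_right hcptL.isClosed) hdenseL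
  have hclR : closure JR = R ∪ JR :=
    Subset.antisymm (closure_minimal subset_union_right hcptR.isClosed) hdenseR
  have hLJ : ∀ x ∈ L, x ∉ J := fun x hx => hdisjJ x (Or.inl hx)
  have hRJ : ∀ x ∈ R, x ∉ J := fun x hx => hdisjJ x (Or.inr hx)
  set c : ℝ → ℝ := fun t => ψ (g t) with hcdef
  -- a sequence of times tending to t0 from the right
  set tseq : ℕ → ℝ := fun n => t0 + (min (1 - t0) (1/((n:ℝ)+1))) / 2 with htsdef
  have htseq_mem : ∀ n, tseq n ∈ Ioc t0 1 := by
    intro n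
    have hmin : 0 < min (1 - t0) (1/((n:ℝ)+1)) := lt_min (by linarith) (by positivity)
    constructor
    · simp only [htsdef]; linarith
    · have h1 := min_le_left (1 - t0) (1/((n:ℝ)+1))
      simp only [htsdef]; linarith
  have htseq_tend : Tendsto tseq atTop (𝓝 t0) := by
    have hupper : Tendsto (fun n : ℕ => t0 + (1/((n:ℝ)+1))/2) atTop (𝓝 t0) := by
      have h1 : Tendsto (fun n : ℕ => t0 + (1/((n:ℝ)+1))/2) atTop (𝓝 (t0 + 0/2)) :=
        Tendsto.add tendsto_const_nhds ((tendsto_one_div_add_atTop_nhds_zero_nat).div_const 2)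
      simpa using h1
    refine tendsto_of_tendsto_of_tendsto_of_le_of_le tendsto_const_nhds hupper
      (fun n => le_of_lt (htseq_mem n).1) (fun n => ?_)
    have h1 := min_le_right (1 - t0) (1/((n:ℝ)+1))
    simp only [htsdef]
    linarith
  have hcval : ∀ n, c (tseq n) ∈ Icc (0:ℝ) 1 := by
    intro n
    have := hψmem _ (hmemJ _ (htseq_mem n))
    exact ⟨le_of_lt this.1, le_of_lt this.2⟩
  obtain ⟨e, heIcc, φ, hφ, hφtend⟩ := isCompact_Icc.tendsto_subseq hcval
  have htseqφ : Tendsto (fun k => tseq (φ k)) atTop (𝓝 t0) :=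
    htseq_tend.comp hφ.tendsto_atTop
  have hA : e = 0 ∨ e = 1 := by
    by_contra hcon
    push_neg at hcon
    have heIoo : e ∈ Ioo (0:ℝ) 1 :=
      ⟨lt_of_le_of_ne heIcc.1 (Ne.symm hcon.1), lt_of_le_of_ne heIcc.2 hcon.2⟩
    have h1 : Tendsto (fun k => ι (c (tseq (φ k)))) atTop (𝓝 (ι e)) :=
      ((hιc.continuousAt (isOpen_Ioo.mem_nhds heIoo)).tendsto).comp hφtend
    have h2 : (fun k => ι (c (tseq (φ k)))) = fun k => g (tseq (φ k)) :=
      funext fun k => hιψ _ (hmemJ _ (htseq_mem (φ k)))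
    rw [h2] at h1
    have h3 : Tendsto (fun k => g (tseq (φ k))) atTop (𝓝 (g t0)) :=
      (hgc.tendsto t0).comp htseqφ
    have h4 : ι e = g t0 := tendsto_nhds_unique h1 h3
    exact hgt0 (h4 ▸ hιmem e heIoo)
  have hstar : ∀ ε > (0:ℝ), ∀ t' > t0, ∃ τ, τ ∈ Ioc t0 1 ∧ τ < t' ∧ |c τ - e| < ε := by
    intro ε hε t' ht'
    have h1 : ∀ᶠ k in atTop, tseq (φ k) < t' := htseqφ.eventually_lt_const ht'
    have h2 : ∀ᶠ k in atTop, dist (c (tseq (φ k))) e < ε :=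
      hφtend.eventually (Metric.ball_mem_nhds e hε)
    obtain ⟨k, hk1, hk2⟩ := (h1.and h2).exists
    exact ⟨tseq (φ k), htseq_mem (φ k), hk1, by rwa [Real.dist_eq] at hk2⟩
  rcases hA with he | he
  · subst he
    refine core0 hC.openJ ψ ι hψmem hιψ hψι hιmem hψc hJLR uL uR hclL hclR
      hLJ hRJ hL hR g hgc t0 ht01 hgt0 hmemJ ?_
    intro ε hε t' ht'
    obtain ⟨τ, h1, h2, h3⟩ := hstar ε hε t' ht'
    have h4 := abs_lt.mp h3
    exact ⟨τ, h1, h2, by simpa using h4.2⟩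
  · subst he
    have p1 : ∀ x ∈ J, (1 - ψ x) ∈ Ioo (0:ℝ) 1 := by
      intro x hx
      have h5 := hψmem x hx
      rw [mem_Ioo] at h5 ⊢
      exact ⟨by linarith [h5.2], by linarith [h5.1]⟩
    have p2 : ∀ x ∈ J, ι (1 - (1 - ψ x)) = x := by
      intro x hx
      have h1 : (1 : ℝ) - (1 - ψ x) = ψ x := by ring
      rw [h1]; exact hιψ x hx
    have p3 : ∀ s ∈ Ioo (0:ℝ) 1, 1 - ψ (ι (1 - s)) = s := by
      intro s hs
      rw [mem_Ioo] at hs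
      have hs' : (1:ℝ) - s ∈ Ioo (0:ℝ) 1 := by
        rw [mem_Ioo]; exact ⟨by linarith, by linarith⟩
      rw [hψι _ hs']; ring
    have p4 : ∀ s ∈ Ioo (0:ℝ) 1, ι (1 - s) ∈ J := by
      intro s hs
      rw [mem_Ioo] at hs
      exact hιmem _ (by rw [mem_Ioo]; exact ⟨by linarith, by linarith⟩)
    refine core0 hC.openJ (fun x => 1 - ψ x) (fun s => ι (1 - s)) p1 p2 p3 p4
      (continuousOn_const.sub hψc) hJLR uL uR hclL hclR hLJ hRJ hL hR g hgc t0 ht01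
      hgt0 hmemJ ?_
    intro ε hε t' ht'
    obtain ⟨τ, h1, h2, h3⟩ := hstar ε hε t' ht'
    have h4 := abs_lt.mp h3
    refine ⟨τ, h1, h2, ?_⟩
    show 1 - ψ (g τ) < ε
    simp only [hcdef] at h4
    linarith [h4.1]


end NoPath

/-- If `X = L ∪ J ∪ R ∈ 𝒞` with `L, R` nondegenerate, then: if `L ∩ R ≠ ∅`
the path components of `X` are exactly `J` and `L ∪ R`; if `L ∩ R = ∅` they are exactly
`J`, `L` and `R`. -/
theorem stmt18 {X : Type*} [TopologicalSpace X] [CompactSpace X] [ConnectedSpace X]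
    [TopologicalSpace.MetrizableSpace X] {L J R : Set X} (hC : ClassC L J R)
    (hL : L.Nontrivial) (hR : R.Nontrivial) :
    ((L ∩ R).Nonempty →
      ∀ D : Set X, (∃ x, D = pathComponent x) ↔ (D = J ∨ D = L ∪ R)) ∧
    (L ∩ R = ∅ →
      ∀ D : Set X, (∃ x, D = pathComponent x) ↔ (D = J ∨ D = L ∨ D = R)) := by
  letI : MetricSpace X := TopologicalSpace.metrizableSpaceMetric X
  classical
  have hJne : J.Nonempty := by
    obtain ⟨h⟩ := hC.freeJ
    have hhalf : (1:ℝ)/2 ∈ Ioo (0:ℝ) 1 := by rw [mem_Ioo]; constructor <;> norm_num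
    exact ⟨(h.symm ⟨1/2, hhalf⟩ : ↥J), (h.symm ⟨1/2, hhalf⟩).2⟩
  have hJpc : IsPathConnected J := by
    obtain ⟨h⟩ := hC.freeJ
    have hhalf : (1:ℝ)/2 ∈ Ioo (0:ℝ) 1 := by rw [mem_Ioo]; constructor <;> norm_num
    have h1 : IsPathConnected (Ioo (0:ℝ) 1) :=
      (convex_Ioo (0:ℝ) 1).isPathConnected ⟨1/2, hhalf⟩
    haveI h2 : PathConnectedSpace ↥(Ioo (0:ℝ) 1) :=
      isPathConnected_iff_pathConnectedSpace.mp h1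
    have h3 : IsPathConnected (univ : Set ↥(Ioo (0:ℝ) 1)) := pathConnectedSpace_iff_univ.mp h2
    have h4 := h3.image (f := fun z : ↥(Ioo (0:ℝ) 1) => ((h.symm z : ↥J) : X))
      (continuous_subtype_val.comp h.symm.continuous)
    have h5 : (fun z : ↥(Ioo (0:ℝ) 1) => ((h.symm z : ↥J) : X)) '' univ = J := by
      rw [image_univ]
      ext x
      constructor
      · rintro ⟨z, rfl⟩; exact (h.symm z).2
      · intro hx
        exact ⟨h ⟨x, hx⟩, congrArg Subtype.val (h.symm_apply_apply ⟨x, hx⟩)⟩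
    rwa [h5] at h4
  have hLpc : IsPathConnected L := by
    haveI : CompactSpace ↥L := isCompact_iff_compactSpace.mp hC.compactL
    haveI : ConnectedSpace ↥L := isConnected_iff_connectedSpace.mp hC.connL
    haveI : LocallyConnectedSpace ↥L := hC.locConnL
    haveI : PathConnectedSpace ↥L := peano_pathConnectedSpace
    exact isPathConnected_iff_pathConnectedSpace.mpr this
  have hRpc : IsPathConnected R := by
    haveI : CompactSpace ↥R := isCompact_iff_compactSpace.mp hC.compactR
    haveI : ConnectedSpace ↥R := isConnected_iff_connectedSpace.mp hC.connR
    haveI : LocallyConnectedSpace ↥R := hC.locConnR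
    haveI : PathConnectedSpace ↥R := peano_pathConnectedSpace
    exact isPathConnected_iff_pathConnectedSpace.mpr this
  have hnoJ : ∀ p ∈ L ∪ R, ∀ q ∈ J, ¬ Joined p q := fun p hp q hq =>
    no_join hC hL hR hp hq
  have huniv : ∀ x : X, x ∈ L ∨ x ∈ J ∨ x ∈ R := by
    intro x
    have hx : x ∈ L ∪ J ∪ R := by rw [hC.union_eq]; trivial
    rcases hx with h1 | h1
    · rcases h1 with h2 | h2
      · exact Or.inl h2
      · exact Or.inr (Or.inl h2)
    · exact Or.inr (Or.inr h1)
  have hcompJ : ∀ x ∈ J, pathComponent x = J := by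
    intro x hx
    apply Subset.antisymm
    · intro y hy
      have hjxy : Joined x y := mem_pathComponent_iff.mp hy
      rcases huniv y with h | h | h
      · exact absurd hjxy.symm (hnoJ y (Or.inl h) x hx)
      · exact h
      · exact absurd hjxy.symm (hnoJ y (Or.inr h) x hx)
    · exact hJpc.subset_pathComponent hx
  constructor
  · -- L ∩ R nonempty
    intro hLR D
    obtain ⟨z, hzL, hzR⟩ := hLR
    have hLRpc : IsPathConnected (L ∪ R) := hLpc.union hRpc ⟨z, hzL, hzR⟩
    have hcompLR : ∀ x ∈ L ∪ R, pathComponent x = L ∪ R := by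
      intro x hx
      apply Subset.antisymm
      · intro y hy
        have hjxy : Joined x y := mem_pathComponent_iff.mp hy
        rcases huniv y with h | h | h
        · exact Or.inl h
        · exact absurd hjxy (hnoJ x hx y h)
        · exact Or.inr h
      · exact hLRpc.subset_pathComponent hx
    constructor
    · rintro ⟨x, rfl⟩
      rcases huniv x with h | h | h
      · exact Or.inr (hcompLR x (Or.inl h))
      · exact Or.inl (hcompJ x h)
      · exact Or.inr (hcompLR x (Or.inr h))
    · rintro (rfl | rfl)
      · obtain ⟨x, hx⟩ := hJne
        exact ⟨x, (hcompJ x hx).symm⟩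
      · exact ⟨z, (hcompLR z (Or.inl hzL)).symm⟩
  · -- L ∩ R empty
    intro hLRdisj D
    have hnoLR : ∀ p ∈ L, ∀ q ∈ R, ¬ Joined p q := by
      intro p hp q hq hJoin
      obtain ⟨γ⟩ := hJoin
      have hexJ : ∃ t ∈ Icc (0:ℝ) 1, γ.extend t ∈ J := by
        by_contra hcon
        push_neg at hcon
        have hsub : Icc (0:ℝ) 1 ⊆ γ.extend ⁻¹' L ∪ γ.extend ⁻¹' R := by
          intro t ht
          rcases huniv (γ.extend t) with h | h | h
          · exact Or.inl h
          · exact absurd h (hcon t ht)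
          · exact Or.inr h
        have h1 : IsPreconnected (Icc (0:ℝ) 1) := isPreconnected_Icc
        have h2 := (isPreconnected_closed_iff.mp h1) (γ.extend ⁻¹' L) (γ.extend ⁻¹' R)
          (hC.compactL.isClosed.preimage γ.continuous_extend)
          (hC.compactR.isClosed.preimage γ.continuous_extend) hsub
          ⟨0, ⟨le_rfl, zero_le_one⟩, by rw [mem_preimage, γ.extend_zero]; exact hp⟩
          ⟨1, ⟨zero_le_one, le_rfl⟩, by rw [mem_preimage, γ.extend_one]; exact hq⟩
        obtain ⟨t, _, htL, htR⟩ := h2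
        have hmem : γ.extend t ∈ L ∩ R := ⟨htL, htR⟩
        rw [hLRdisj] at hmem
        exact hmem
      obtain ⟨t, htIcc, htJ⟩ := hexJ
      have hJoin2 : Joined (γ.extend (0 ⊓ t)) (γ.extend t) := ⟨γ.truncate 0 t⟩
      rw [min_eq_left htIcc.1, γ.extend_zero] at hJoin2
      exact hnoJ p (Or.inl hp) (γ.extend t) htJ hJoin2
    have hcompL : ∀ x ∈ L, pathComponent x = L := by
      intro x hx
      apply Subset.antisymm
      · intro y hy
        have hjxy : Joined x y := mem_pathComponent_iff.mp hy
        rcases huniv y with h | h | h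
        · exact h
        · exact absurd hjxy (hnoJ x (Or.inl hx) y h)
        · exact absurd hjxy (hnoLR x hx y h)
      · exact hLpc.subset_pathComponent hx
    have hcompR : ∀ x ∈ R, pathComponent x = R := by
      intro x hx
      apply Subset.antisymm
      · intro y hy
        have hjxy : Joined x y := mem_pathComponent_iff.mp hy
        rcases huniv y with h | h | h
        · exact absurd hjxy.symm (hnoLR y h x hx)
        · exact absurd hjxy (hnoJ x (Or.inr hx) y h)
        · exact h
      · exact hRpc.subset_pathComponent hx
    constructor
    · rintro ⟨x, rfl⟩
      rcases huniv x with h | h | h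
      · exact Or.inr (Or.inl (hcompL x h))
      · exact Or.inl (hcompJ x h)
      · exact Or.inr (Or.inr (hcompR x h))
    · rintro (rfl | rfl | rfl)
      · obtain ⟨x, hx⟩ := hJne
        exact ⟨x, (hcompJ x hx).symm⟩
      · obtain ⟨x, hx⟩ := hL.nonempty
        exact ⟨x, (hcompL x hx).symm⟩
      · obtain ⟨x, hx⟩ := hR.nonempty
        exact ⟨x, (hcompR x hx).symm⟩
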